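/- Let Λ be a finite index set, H = ⨂_{n∈Λ} ℂ^{d_n}, and N : Λ → (subsets of Λ) a neighbourhood map. Suppose the unitary U on H is locality preserving for N: for every n ∈ Λ and every operator A localized on site n, U*AU is localized on N(n). Then the inverse is locality preserving for the transposed neighbourhood map: for every n ∈ Λ and every operator A localized on site n, U A U* is localized on N̄(n) := {m ∈ Λ : n ∈ N(m)}. -/

import Mathlib

/-!
Operators localized on disjoint regions commute, and conversely an operator commuting with every
one-site operator at the sites outside `R` is localized on `R`. If `A` sits on site `n` and
`B` on a site `m` with `n ∉ Nbr m`, then `U* B U` is localized on `Nbr m`, hence commutes with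
`A`; conjugating back by `U` shows that `U A U*` commutes with `B`. So `U A U*` commutes with
all one-site operators off `{m | n ∈ Nbr m}`, i.e. it is localized there.
-/

open scoped Kronecker

namespace QCA

variable {ι : Type} [Fintype ι] [DecidableEq ι]
variable (F : ι → Type) [∀ i, Fintype (F i)] [∀ i, DecidableEq (F i)]

/-- Configurations: the product basis labels of the lattice Hilbert space `⨂ i, ℂ^(F i)`. -/
abbrev Conf : Type := ∀ i, F i

/-- Operators on the lattice Hilbert space, as matrices in the product basis. -/
abbrev Ops : Type := Matrix (Conf F) (Conf F) ℂ

/-- `A` is localized on the region `R` if it has the form `B ⊗ 1` with respect to the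
splitting `R | Rᶜ` of the tensor factors (entrywise characterization). -/
def Localized (A : Ops F) (R : Set ι) : Prop :=
  (∀ x y : Conf F, A x y ≠ 0 → ∀ i ∉ R, x i = y i) ∧
  (∀ x y x' y' : Conf F, (∀ i ∈ R, x i = x' i) → (∀ i ∈ R, y i = y' i) →
      (∀ i ∉ R, x i = y i) → (∀ i ∉ R, x' i = y' i) → A x y = A x' y')

/-- Heisenberg evolution `A ↦ U* A U`. -/
noncomputable def heis (U A : Ops F) : Ops F := star U * A * U

/-- The support algebra `S(𝒮, R)`: the smallest subalgebra of operators localized on `R`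
such that `𝒮` is contained in (the algebra generated by) it together with the full algebra
of operators localized on `Rᶜ`. -/
noncomputable def supportAlgebra (S : Set (Ops F)) (R : Set ι) : Subalgebra ℂ (Ops F) :=
  sInf {C : Subalgebra ℂ (Ops F) |
    (C : Set (Ops F)) ⊆ {A | Localized F A R} ∧
    S ⊆ ↑(Algebra.adjoin ℂ ((C : Set (Ops F)) ∪ {A | Localized F A Rᶜ}))}

section Ring

variable {M : ℕ} (sector : ZMod M → Finset ι)

/-- `U` is a nearest-neighbour QCA for the ring of `M` (super)cells described by `sector`:
`U` is unitary, and conjugation by `U` maps operators localized on cell `k` to operators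
localized on cells `{k-1, k, k+1}`. -/
def IsRingQCA (U : Ops F) : Prop :=
  U ∈ Matrix.unitaryGroup (Conf F) ℂ ∧
  ∀ (k : ZMod M) (A : Ops F), Localized F A ↑(sector k) →
    Localized F (heis F U A) (↑(sector (k - 1)) ∪ ↑(sector k) ∪ ↑(sector (k + 1)))

/-- The even support algebra `R_k = S(u(A_k ⊗ A_{k+1}), A_{k-1} ⊗ A_k)` (`k` an even site). -/
noncomputable def REven (U : Ops F) (k : ZMod M) : Subalgebra ℂ (Ops F) :=
  supportAlgebra F (heis F U '' {A | Localized F A (↑(sector k) ∪ ↑(sector (k + 1)))})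
    (↑(sector (k - 1)) ∪ ↑(sector k))

/-- The odd support algebra `R_{k+1} = S(u(A_k ⊗ A_{k+1}), A_{k+1} ⊗ A_{k+2})` (`k` even). -/
noncomputable def ROdd (U : Ops F) (k : ZMod M) : Subalgebra ℂ (Ops F) :=
  supportAlgebra F (heis F U '' {A | Localized F A (↑(sector k) ∪ ↑(sector (k + 1)))})
    (↑(sector (k + 1)) ∪ ↑(sector (k + 2)))

/-- The Hilbert space dimension of the (super)cell `k`. -/
def siteDim (k : ZMod M) : ℕ := ∏ i ∈ sector k, Fintype.card (F i)

/-- `r` with `C ≅ M_r(ℂ)`, recovered as the square root of the linear dimension of `C`. -/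
noncomputable def rdim (C : Subalgebra ℂ (Ops F)) : ℕ := Nat.sqrt (Module.finrank ℂ C)

/-- The GNVW index `ind[U] = r_{2n} / d_{2n}`, evaluated at the even site `2n = 0`. -/
noncomputable def ringIndex (U : Ops F) : ℚ :=
  (rdim F (REven F sector U 0) : ℚ) / (siteDim F sector 0 : ℚ)

end Ring

/-- The standard ring structure: one site per cell. -/
def stdSector (N : ℕ) : ZMod N → Finset (ZMod N) := fun n => {n}

/-- The embedding of a one-site operator at site `i` into the lattice algebra. -/
noncomputable def embedAt (i : ι) (B : Matrix (F i) (F i) ℂ) : Ops F :=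
  fun x y => (if ∀ j, j ≠ i → x j = y j then 1 else 0) * B (x i) (y i)

/-- Pairing of configurations of two parallel lattices. -/
def confPairEquiv (G : ι → Type) [∀ i, Fintype (G i)] [∀ i, DecidableEq (G i)] :
    (Conf F × Conf G) ≃ Conf (fun i => F i × G i) where
  toFun p := fun i => (p.1 i, p.2 i)
  invFun x := (fun i => (x i).1, fun i => (x i).2)
  left_inv _ := rfl
  right_inv _ := rfl

/-- The tensor product `A ⊗ B` of operators on two parallel lattices, as an operator on the
lattice whose site `i` carries the qudit `F i × G i`. -/
noncomputable def tensorOps (G : ι → Type) [∀ i, Fintype (G i)] [∀ i, DecidableEq (G i)]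
    (A : Ops F) (B : Ops G) : Ops (fun i => F i × G i) :=
  Matrix.reindex (confPairEquiv F G) (confPairEquiv F G) (A ⊗ₖ B)

end QCA

theorem Commute.conj_of_mul_eq_one {M : Type*} [Monoid M] {u v a b : M} (huv : u * v = 1)
    (h : Commute a (v * b * u)) : Commute (u * a * v) b :=
  calc u * a * v * b = u * (a * (v * b * u)) * v := by simp only [mul_assoc, huv, mul_one]
    _ = u * (v * b * u * a) * v := by rw [h.eq]
    _ = b * (u * a * v) := by simp only [← mul_assoc, huv, one_mul]

theorem Function.eq_of_apply_update_eq {α β : Type*} [Fintype α] [DecidableEq α]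
    {δ : α → Type*} {g : (∀ i, δ i) → β} (hg : ∀ s i c, g (Function.update s i c) = g s)
    (s s' : ∀ i, δ i) : g s = g s' := by
  suffices ∀ T : Finset α, g s = g (fun i => if i ∈ T then s' i else s i) by
    simpa using this Finset.univ
  intro T
  induction T using Finset.induction_on with
  | empty => simp
  | insert j T hj ih =>
    rw [ih, ← hg _ j (s' j)]
    congr 1
    funext i
    by_cases hij : i = j
    · subst hij; simp
    · simp [hij]

theorem Set.piecewise_update_of_mem {α : Type*} {δ : α → Type*} [DecidableEq α]
    {s : Set α} [∀ j, Decidable (j ∈ s)] {f g : ∀ i, δ i} {i : α} (hi : i ∈ s)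
    (v : δ i) :
    s.piecewise f (Function.update g i v) = s.piecewise f g := by
  funext j
  by_cases hj : j ∈ s
  · simp [hj]
  · simp [hj, show j ≠ i by rintro rfl; exact hj hi]

theorem Set.piecewise_update_of_notMem {α : Type*} {δ : α → Type*} [DecidableEq α]
    {s : Set α} [∀ j, Decidable (j ∈ s)] {f g : ∀ i, δ i} {i : α} (hi : i ∉ s)
    (v : δ i) :
    s.piecewise f (Function.update g i v) = Function.update (s.piecewise f g) i v := by
  funext j
  by_cases hj : j ∈ s
  · simp [hj, show j ≠ i by rintro rfl; exact hi hj]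
  · by_cases hji : j = i
    · subst hji; simp [hj]
    · simp [hj, hji]

namespace QCA

variable {ι : Type} {F : ι → Type}

theorem Localized.apply_eq_zero {A : Ops F} {R : Set ι} (hA : Localized F A R) {x y : Conf F}
    {i : ι} (hi : i ∉ R) (hxy : x i ≠ y i) : A x y = 0 :=
  by_contra fun h => hxy (hA.1 x y h i hi)

variable [Fintype ι] [DecidableEq ι] [∀ i, DecidableEq (F i)]

theorem localized_embedAt (i : ι) (B : Matrix (F i) (F i) ℂ) :
    Localized F (embedAt F i B) {i} := by
  simp only [Localized, Set.mem_singleton_iff, forall_eq]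
  refine ⟨fun x y hxy j hj => ?_, fun x y x' y' hx hy hxy hxy' => ?_⟩
  · by_contra hne
    exact hxy (by simp [embedAt, show ¬∀ k, k ≠ i → x k = y k from fun h => hne (h j hj)])
  · simp [embedAt, hx, hy, if_pos hxy, if_pos hxy']

theorem embedAt_single_apply (m : ι) (a b : F m) (x y : Conf F) :
    embedAt F m (Matrix.single a b 1) x y =
      if x m = a ∧ y m = b ∧ ∀ j, j ≠ m → x j = y j then 1 else 0 := by
  simp only [embedAt, Matrix.single_apply]
  by_cases h : ∀ j, j ≠ m → x j = y j <;> by_cases hx : x m = a <;> by_cases hy : y m = b <;>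
    simp_all [eq_comm]

variable [∀ i, Fintype (F i)]

theorem Localized.mul_apply_of_disjoint {A B : Ops F} {R S : Set ι} (hA : Localized F A R)
    (hB : Localized F B S) (hRS : Disjoint R S) [DecidablePred (· ∈ R)] (x y : Conf F) :
    (A * B) x y = A x (R.piecewise y x) * B (R.piecewise y x) y := by
  rw [Matrix.mul_apply]
  refine Finset.sum_eq_single _ (fun w _ hw => ?_) (by simp)
  obtain ⟨i, hi⟩ : ∃ i, w i ≠ R.piecewise y x i := by
    by_contra! hw'
    exact hw (funext hw')
  by_cases hiR : i ∈ R
  · rw [hB.apply_eq_zero (hRS.notMem_of_mem_left hiR) (by simpa [hiR] using hi), mul_zero]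
  · rw [hA.apply_eq_zero hiR (by simpa [hiR] using Ne.symm hi), zero_mul]

theorem Localized.commute_of_disjoint {A B : Ops F} {R S : Set ι} (hA : Localized F A R)
    (hB : Localized F B S) (hRS : Disjoint R S) : Commute A B := by
  classical
  show A * B = B * A
  ext x y
  rw [hA.mul_apply_of_disjoint hB hRS, hB.mul_apply_of_disjoint hA hRS.symm]
  -- both sides are the same product of an `A`-entry and a `B`-entry if `x`, `y` agree off
  -- `R ∪ S`, and both vanish otherwise
  by_cases hxy : ∀ i, i ∉ R → i ∉ S → x i = y i
  · have hRS' := Set.disjoint_left.mp hRS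
    rw [hA.2 x _ (S.piecewise y x) y ?_ ?_ ?_ ?_, hB.2 _ y x (S.piecewise y x) ?_ ?_ ?_ ?_,
      mul_comm]
    all_goals
      intro i hi
      by_cases hiR : i ∈ R <;> by_cases hiS : i ∈ S <;> simp_all
  · push Not at hxy
    obtain ⟨i, hiR, hiS, hne⟩ := hxy
    rw [hB.apply_eq_zero (x := R.piecewise y x) hiS (by simpa [hiR] using hne),
      hA.apply_eq_zero (x := S.piecewise y x) hiR (by simpa [hiS] using hne), mul_zero, mul_zero]

theorem mul_embedAt_single_apply (C : Ops F) (m : ι) (a b : F m) (x y : Conf F) :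
    (C * embedAt F m (Matrix.single a b 1)) x y =
      if y m = b then C x (Function.update y m a) else 0 := by
  have hw : ∀ w : Conf F, (w m = a ∧ y m = b ∧ ∀ j, j ≠ m → w j = y j) ↔
      (y m = b ∧ w = Function.update y m a) := fun w => by
    rw [Function.eq_update_iff]; tauto
  simp [Matrix.mul_apply, embedAt_single_apply, hw, ite_and]

theorem embedAt_single_mul_apply (C : Ops F) (m : ι) (a b : F m) (x y : Conf F) :
    (embedAt F m (Matrix.single a b 1) * C) x y =
      if x m = a then C (Function.update x m b) y else 0 := by
  have hw : ∀ w : Conf F, (x m = a ∧ w m = b ∧ ∀ j, j ≠ m → x j = w j) ↔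
      (x m = a ∧ w = Function.update x m b) := fun w => by
    rw [Function.eq_update_iff]; grind
  simp [Matrix.mul_apply, embedAt_single_apply, hw, ite_and]

theorem apply_eq_zero_of_commute_embedAt {C : Ops F} {m : ι}
    (h : ∀ B : Matrix (F m) (F m) ℂ, Commute C (embedAt F m B)) {x y : Conf F}
    (hxy : x m ≠ y m) : C x y = 0 := by
  have := congrFun (congrFun (h (Matrix.single (x m) (x m) 1)).eq x) y
  rw [mul_embedAt_single_apply, embedAt_single_mul_apply, if_neg hxy.symm, if_pos rfl,
    Function.update_eq_self] at this
  exact this.symm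

theorem apply_update_update_of_commute_embedAt {C : Ops F} {m : ι}
    (h : ∀ B : Matrix (F m) (F m) ℂ, Commute C (embedAt F m B)) {x y : Conf F}
    (hxy : x m = y m) (c : F m) :
    C (Function.update x m c) (Function.update y m c) = C x y := by
  have := congrFun (congrFun (h (Matrix.single (x m) c 1)).eq x) (Function.update y m c)
  rw [mul_embedAt_single_apply, embedAt_single_mul_apply] at this
  simpa [hxy] using this.symm

theorem localized_of_forall_commute_embedAt {C : Ops F} {R : Set ι}
    (h : ∀ m ∉ R, ∀ B : Matrix (F m) (F m) ℂ, Commute C (embedAt F m B)) :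
    Localized F C R := by
  classical
  refine ⟨fun x y hC i hi => by_contra fun hxy =>
    hC (apply_eq_zero_of_commute_embedAt (h i hi) hxy), fun x y x' y' hx hy hxy hxy' => ?_⟩
  -- off `R`, moving both arguments of `C` to a common configuration `s` does not change `C`
  let g : Conf F → ℂ := fun s => C (R.piecewise x s) (R.piecewise y s)
  have hg : ∀ s m c, g (Function.update s m c) = g s := by
    intro s m c
    by_cases hm : m ∈ R
    · simp only [g, Set.piecewise_update_of_mem hm]
    · simp only [g, Set.piecewise_update_of_notMem hm]
      refine apply_update_update_of_commute_embedAt (h m hm) ?_ c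
      rw [Set.piecewise_eq_of_notMem _ _ _ hm, Set.piecewise_eq_of_notMem _ _ _ hm]
  have hgx : g x = C x y := by
    simp only [g]; congr 1 <;> funext i <;> by_cases hi : i ∈ R <;> simp [hi, hxy]
  have hgx' : g x' = C x' y' := by
    simp only [g]; congr 1 <;> funext i <;> by_cases hi : i ∈ R <;> simp [hi, hx, hy, hxy']
  rw [← hgx, ← hgx', Function.eq_of_apply_update_eq hg]

theorem inverse_locality_preserving_general (Λ : Type) [Fintype Λ] [DecidableEq Λ]
    (d : Λ → ℕ) (Nbr : Λ → Set Λ)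
    (U : Ops (fun i : Λ => Fin (d i)))
    (hU : U ∈ Matrix.unitaryGroup (Conf (fun i : Λ => Fin (d i))) ℂ)
    (h : ∀ (n : Λ) (A : Ops (fun i : Λ => Fin (d i))),
      Localized (fun i : Λ => Fin (d i)) A ({n} : Set Λ) →
      Localized (fun i : Λ => Fin (d i)) (star U * A * U) (Nbr n)) :
    ∀ (n : Λ) (A : Ops (fun i : Λ => Fin (d i))),
      Localized (fun i : Λ => Fin (d i)) A ({n} : Set Λ) →
      Localized (fun i : Λ => Fin (d i)) (U * A * star U) {m : Λ | n ∈ Nbr m} := by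
  intro n A hA
  refine localized_of_forall_commute_embedAt fun m hm B => ?_
  have hUBU := h m _ (localized_embedAt m B)
  have hcomm := hA.commute_of_disjoint hUBU (Set.disjoint_singleton_left.mpr hm)
  exact hcomm.conj_of_mul_eq_one (Matrix.mem_unitaryGroup_iff.mp hU)

/-- If a unitary on a finite lattice of qudits is locality preserving for
the neighbourhood map `Nbr` (i.e. `U* A U` is localized on `Nbr n` whenever `A` is localized
on site `n`), then its inverse is locality preserving for the transposed neighbourhood map
`n ↦ {m | n ∈ Nbr m}`. -/
theorem inverse_locality_preserving (Λ : Type) [Fintype Λ] [DecidableEq Λ]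
    (d : Λ → ℕ) (hd : ∀ i, 1 ≤ d i) (Nbr : Λ → Set Λ)
    (U : Ops (fun i : Λ => Fin (d i)))
    (hU : U ∈ Matrix.unitaryGroup (Conf (fun i : Λ => Fin (d i))) ℂ)
    (h : ∀ (n : Λ) (A : Ops (fun i : Λ => Fin (d i))),
      Localized (fun i : Λ => Fin (d i)) A ({n} : Set Λ) →
      Localized (fun i : Λ => Fin (d i)) (star U * A * U) (Nbr n)) :
    ∀ (n : Λ) (A : Ops (fun i : Λ => Fin (d i))),
      Localized (fun i : Λ => Fin (d i)) A ({n} : Set Λ) →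
      Localized (fun i : Λ => Fin (d i)) (U * A * star U) {m : Λ | n ∈ Nbr m} :=
  inverse_locality_preserving_general Λ d Nbr U hU h

end QCA
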